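/- Let X be a set, H a Hilbert space, and ξ, η : X → H bounded maps with ‖ξ(x)‖ ≤ 1 and ‖η(y)‖ ≤ 1 for all x, y. Define k(x,y) = ⟨ξ(x), η(y)⟩. Then for any finitely supported function T : X × X → ℂ viewed as a kernel of an operator on ℓ²(X), the operator with kernel (x,y) ↦ k(x,y)·T(x,y) has operator norm at most the operator norm of T (i.e., the Schur multiplier S_k is bounded with norm at most 1 on such operators). -/

import Mathlib

/-!
Let `F` be a finite set carrying the support of `T`, and let `(bᵢ)` be an orthonormal basis of
the span of `η(F)`. On `F × F` the multiplier factors as `k x y = ∑ᵢ ⟪ξ x, bᵢ⟫ ⟪bᵢ, η y⟫`, so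
`⟪ST f, g⟫ = ∑ᵢ ⟪TT fᵢ, gᵢ⟫`, where `fᵢ`, `gᵢ` are `f`, `g` multiplied pointwise by the coordinates
of `η`, `ξ` in that basis. Bessel's inequality gives `∑ᵢ ‖fᵢ‖² ≤ ‖f‖²` and `∑ᵢ ‖gᵢ‖² ≤ ‖g‖²`,
and Cauchy–Schwarz in `i` then bounds `|⟪ST f, g⟫|` by `‖TT‖ ‖f‖ ‖g‖`.
-/

open ComplexConjugate
open scoped lp

theorem ContinuousLinearMap.norm_sum_inner_apply_le {𝕜 E F ι : Type*} [RCLike 𝕜]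
    [NormedAddCommGroup E] [InnerProductSpace 𝕜 E] [NormedAddCommGroup F] [InnerProductSpace 𝕜 F]
    [Fintype ι] (W : E →L[𝕜] F) {c : ι → E} {d : ι → F} (hc : ∑ i, ‖c i‖ ^ 2 ≤ 1)
    (hd : ∑ i, ‖d i‖ ^ 2 ≤ 1) : ‖∑ i, inner 𝕜 (W (c i)) (d i)‖ ≤ ‖W‖ := by
  have hcd : ∑ i, ‖c i‖ * ‖d i‖ ≤ 1 := by
    have := Finset.sum_le_sum fun i (_ : i ∈ Finset.univ) => two_mul_le_add_sq ‖c i‖ ‖d i‖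
    rw [Finset.sum_add_distrib] at this
    simp only [mul_assoc, ← Finset.mul_sum] at this
    linarith
  calc ‖∑ i, inner 𝕜 (W (c i)) (d i)‖
      ≤ ∑ i, ‖W‖ * (‖c i‖ * ‖d i‖) := by
        refine (norm_sum_le _ _).trans (Finset.sum_le_sum fun i _ => ?_)
        rw [← mul_assoc]
        exact (norm_inner_le_norm _ _).trans
          (mul_le_mul_of_nonneg_right (W.le_opNorm _) (norm_nonneg _))
    _ ≤ ‖W‖ := by
        rw [← Finset.mul_sum]
        exact mul_le_of_le_one_right (norm_nonneg W) hcd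

theorem exists_orthonormal_inner_eq_sum {𝕜 H : Type*} [RCLike 𝕜] [NormedAddCommGroup H]
    [InnerProductSpace 𝕜 H] (s : Finset H) :
    ∃ (n : ℕ) (b : Fin n → H), Orthonormal 𝕜 b ∧
      ∀ v, ∀ w ∈ s, inner 𝕜 v w = ∑ i, inner 𝕜 v (b i) * inner 𝕜 (b i) w := by
  let V := Submodule.span 𝕜 (s : Set H)
  let b := stdOrthonormalBasis 𝕜 V
  refine ⟨_, fun i => b i, b.orthonormal.comp_linearIsometry V.subtypeₗᵢ, fun v w hw => ?_⟩
  have hrepr : ∑ i, inner 𝕜 (b i : H) w • (b i : H) = w := by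
    simpa using congrArg ((↑) : V → H) (b.sum_repr' ⟨w, Submodule.subset_span hw⟩)
  conv_lhs => rw [← hrepr]
  simp only [inner_sum, inner_smul_right, mul_comm]

theorem Orthonormal.sum_norm_inner_sq_le_one {𝕜 H ι : Type*} [RCLike 𝕜] [NormedAddCommGroup H]
    [InnerProductSpace 𝕜 H] [Fintype ι] {b : ι → H} (hb : Orthonormal 𝕜 b) {v : H}
    (hv : ‖v‖ ≤ 1) : ∑ i, ‖inner 𝕜 (b i) v‖ ^ 2 ≤ 1 :=
  (hb.sum_inner_products_le v).trans (pow_le_one₀ (norm_nonneg v) hv)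

theorem Set.Finite.exists_finset_kernel_support {X R : Type*} [Zero R] {T : X → X → R}
    (hT : (Function.support fun p : X × X => T p.1 p.2).Finite) :
    ∃ F : Finset X, ∀ x y, T x y ≠ 0 → x ∈ F ∧ y ∈ F := by
  classical
  refine ⟨hT.toFinset.image Prod.fst ∪ hT.toFinset.image Prod.snd, fun x y hxy => ?_⟩
  have hmem : (x, y) ∈ hT.toFinset := hT.mem_toFinset.2 hxy
  exact ⟨Finset.mem_union_left _ (Finset.mem_image_of_mem _ hmem),
    Finset.mem_union_right _ (Finset.mem_image_of_mem Prod.snd hmem)⟩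

section Kernel

variable {𝕜 : Type*} [RCLike 𝕜] {X : Type*}

theorem lp.inner_eq_sum_of_apply_eq_zero {F : Finset X} {u : ℓ²(X, 𝕜)} (hu : ∀ x ∉ F, u x = 0)
    (g : ℓ²(X, 𝕜)) : inner 𝕜 u g = ∑ x ∈ F, conj (u x) * g x := by
  rw [lp.inner_eq_tsum, tsum_eq_sum (s := F) fun x hx => by simp [hu x hx]]
  simp only [RCLike.inner_apply, mul_comm]

theorem lp.sum_norm_sq_apply_le (F : Finset X) (f : ℓ²(X, 𝕜)) : ∑ x ∈ F, ‖f x‖ ^ 2 ≤ ‖f‖ ^ 2 := by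
  have h2 : (0 : ℝ) < (2 : ENNReal).toReal := by norm_num
  have hnorm := lp.norm_rpow_eq_tsum h2 f
  have h := ((lp.memℓp f).summable h2).sum_le_tsum F fun x _ => by positivity
  simp only [ENNReal.toReal_ofNat, Real.rpow_two] at hnorm h
  rwa [hnorm]

variable [DecidableEq X]

theorem lp.norm_sq_sum_single (F : Finset X) (c : X → 𝕜) :
    ‖(∑ x ∈ F, lp.single 2 x (c x) : ℓ²(X, 𝕜))‖ ^ 2 = ∑ x ∈ F, ‖c x‖ ^ 2 := by
  simpa using lp.norm_sum_single (p := 2) (E := fun _ : X => 𝕜) (by norm_num) c F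

theorem ContinuousLinearMap.apply_single_apply_of_inner {W : ℓ²(X, 𝕜) →L[𝕜] ℓ²(X, 𝕜)}
    {M : X → X → 𝕜}
    (hW : ∀ x y, inner 𝕜 (W (lp.single 2 y 1)) (lp.single 2 x (1 : 𝕜)) = M x y) (x y : X) :
    W (lp.single 2 y 1) x = conj (M x y) := by
  simp [← hW x y, lp.inner_single_right, RCLike.inner_apply]

theorem ContinuousLinearMap.eq_sum_smul_of_apply_single_eq_zero {W : ℓ²(X, 𝕜) →L[𝕜] ℓ²(X, 𝕜)}
    {F : Finset X} (hW : ∀ y ∉ F, W (lp.single 2 y 1) = 0) (f : ℓ²(X, 𝕜)) :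
    W f = ∑ y ∈ F, f y • W (lp.single 2 y 1) := by
  have hsingle : ∀ y, W (lp.single 2 y (f y)) = f y • W (lp.single 2 y 1) := fun y => by
    rw [← map_smul, ← lp.single_smul, smul_eq_mul, mul_one]
  refine (W.hasSum (lp.hasSum_single (by norm_num) f)).unique ?_
  rw [funext hsingle]
  exact hasSum_sum_of_ne_finset_zero fun y hy => by rw [hW y hy, smul_zero]

theorem ContinuousLinearMap.inner_apply_eq_sum_kernel {W : ℓ²(X, 𝕜) →L[𝕜] ℓ²(X, 𝕜)} {M : X → X → 𝕜}
    (hW : ∀ x y, inner 𝕜 (W (lp.single 2 y 1)) (lp.single 2 x (1 : 𝕜)) = M x y)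
    {F : Finset X} (hM : ∀ x y, M x y ≠ 0 → x ∈ F ∧ y ∈ F) (f g : ℓ²(X, 𝕜)) :
    inner 𝕜 (W f) g = ∑ y ∈ F, ∑ x ∈ F, conj (f y) * M x y * g x := by
  have hcoord := W.apply_single_apply_of_inner hW
  have hzero : ∀ y ∉ F, W (lp.single 2 y 1) = 0 := fun y hy => lp.ext <| funext fun x => by
    rw [hcoord, not_imp_comm.mp (fun h => (hM x y h).2) hy, map_zero]
    rfl
  rw [W.eq_sum_smul_of_apply_single_eq_zero hzero f, sum_inner]
  refine Finset.sum_congr rfl fun y _ => ?_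
  rw [inner_smul_left, lp.inner_eq_sum_of_apply_eq_zero (F := F), Finset.mul_sum]
  · simp only [hcoord, RCLike.conj_conj, mul_assoc]
  · intro x hx
    rw [hcoord, not_imp_comm.mp (fun h => (hM x y h).1) hx, map_zero]

noncomputable def compressMul (F : Finset X) (a : X → 𝕜) (f : ℓ²(X, 𝕜)) : ℓ²(X, 𝕜) :=
  ∑ x ∈ F, lp.single 2 x (a x * f x)

theorem compressMul_apply_of_mem {F : Finset X} {x : X} (hx : x ∈ F) (a : X → 𝕜) (f : ℓ²(X, 𝕜)) :
    compressMul F a f x = a x * f x := by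
  rw [compressMul, lp.coeFn_sum, Finset.sum_apply]
  simp [lp.single_apply, hx]

theorem sum_norm_sq_compressMul_le {ι : Type*} [Fintype ι] {F : Finset X} {a : ι → X → 𝕜}
    (ha : ∀ x ∈ F, ∑ i, ‖a i x‖ ^ 2 ≤ 1) (f : ℓ²(X, 𝕜)) :
    ∑ i, ‖compressMul F (a i) f‖ ^ 2 ≤ ‖f‖ ^ 2 :=
  calc ∑ i, ‖compressMul F (a i) f‖ ^ 2
      = ∑ x ∈ F, (∑ i, ‖a i x‖ ^ 2) * ‖f x‖ ^ 2 := by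
        simp only [compressMul, lp.norm_sq_sum_single, norm_mul, mul_pow, Finset.sum_mul]
        exact Finset.sum_comm
    _ ≤ ∑ x ∈ F, ‖f x‖ ^ 2 :=
        Finset.sum_le_sum fun x hx => mul_le_of_le_one_left (by positivity) (ha x hx)
    _ ≤ ‖f‖ ^ 2 := lp.sum_norm_sq_apply_le F f

theorem opNorm_le_of_kernel_eq_sum_mul {ι : Type*} [Fintype ι] {F : Finset X}
    {α β : ι → X → 𝕜} (hα : ∀ x ∈ F, ∑ i, ‖α i x‖ ^ 2 ≤ 1) (hβ : ∀ y ∈ F, ∑ i, ‖β i y‖ ^ 2 ≤ 1)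
    {M k : X → X → 𝕜} (hM : ∀ x y, M x y ≠ 0 → x ∈ F ∧ y ∈ F)
    (hk : ∀ x ∈ F, ∀ y ∈ F, k x y = ∑ i, α i x * β i y) {W S : ℓ²(X, 𝕜) →L[𝕜] ℓ²(X, 𝕜)}
    (hW : ∀ x y, inner 𝕜 (W (lp.single 2 y 1)) (lp.single 2 x (1 : 𝕜)) = M x y)
    (hS : ∀ x y, inner 𝕜 (S (lp.single 2 y 1)) (lp.single 2 x (1 : 𝕜)) = k x y * M x y) :
    ‖S‖ ≤ ‖W‖ := by
  have hkM : ∀ x y, k x y * M x y ≠ 0 → x ∈ F ∧ y ∈ F := fun x y h =>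
    hM x y (right_ne_zero_of_mul h)
  have hβ' : ∀ y ∈ F, ∑ i, ‖conj (β i y)‖ ^ 2 ≤ 1 := by simpa only [RCLike.norm_conj] using hβ
  refine ContinuousLinearMap.opNorm_le_of_re_inner_le (norm_nonneg W) fun f g hf hg => ?_
  have hfactor : inner 𝕜 (S f) g = ∑ i, inner 𝕜 (W (compressMul F (fun y => conj (β i y)) f))
      (compressMul F (α i) g) :=
    calc inner 𝕜 (S f) g = ∑ y ∈ F, ∑ x ∈ F, conj (f y) * (k x y * M x y) * g x :=
          S.inner_apply_eq_sum_kernel hS hkM f g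
      _ = ∑ y ∈ F, ∑ x ∈ F, ∑ i, conj (conj (β i y) * f y) * M x y * (α i x * g x) := by
          refine Finset.sum_congr rfl fun y hy => Finset.sum_congr rfl fun x hx => ?_
          rw [hk x hx y hy]
          simp only [Finset.sum_mul, Finset.mul_sum]
          refine Finset.sum_congr rfl fun i _ => ?_
          simp only [map_mul, RCLike.conj_conj]
          ring
      _ = ∑ y ∈ F, ∑ i, ∑ x ∈ F, conj (conj (β i y) * f y) * M x y * (α i x * g x) :=
          Finset.sum_congr rfl fun _ _ => Finset.sum_comm
      _ = ∑ i, ∑ y ∈ F, ∑ x ∈ F, conj (conj (β i y) * f y) * M x y * (α i x * g x) :=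
          Finset.sum_comm
      _ = _ := by
          refine Finset.sum_congr rfl fun i _ => ?_
          rw [W.inner_apply_eq_sum_kernel hW hM]
          refine Finset.sum_congr rfl fun y hy => Finset.sum_congr rfl fun x hx => ?_
          rw [compressMul_apply_of_mem hy, compressMul_apply_of_mem hx]
  rw [hfactor]
  refine (RCLike.re_le_norm _).trans (W.norm_sum_inner_apply_le ?_ ?_)
  · simpa [hf] using sum_norm_sq_compressMul_le hβ' f
  · simpa [hg] using sum_norm_sq_compressMul_le hα g

end Kernel

theorem stmt1_general (X : Type*) [DecidableEq X]
    (H : Type*) [NormedAddCommGroup H] [InnerProductSpace ℂ H]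
    (ξ η : X → H) (hξ : ∀ x, ‖ξ x‖ ≤ 1) (hη : ∀ y, ‖η y‖ ≤ 1)
    (k : X → X → ℂ) (hk : ∀ x y, k x y = (inner ℂ (ξ x) (η y) : ℂ))
    (T : X → X → ℂ) (hTfin : (Function.support fun p : X × X => T p.1 p.2).Finite)
    (TT ST : lp (fun _ : X => ℂ) 2 →L[ℂ] lp (fun _ : X => ℂ) 2)
    (hTT : ∀ x y : X,
      (inner ℂ (TT (lp.single 2 y 1)) (lp.single 2 x (1 : ℂ)) : ℂ) = T x y)
    (hST : ∀ x y : X,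
      (inner ℂ (ST (lp.single 2 y 1)) (lp.single 2 x (1 : ℂ)) : ℂ) = k x y * T x y) :
    ‖ST‖ ≤ ‖TT‖ := by
  classical
  obtain ⟨F, hF⟩ := hTfin.exists_finset_kernel_support
  obtain ⟨_, b, hb, hexpand⟩ := exists_orthonormal_inner_eq_sum (𝕜 := ℂ) (F.image η)
  have hξb : ∀ x, ∑ i, ‖inner ℂ (ξ x) (b i)‖ ^ 2 ≤ 1 := fun x => by
    simpa only [norm_inner_symm] using hb.sum_norm_inner_sq_le_one (hξ x)
  exact opNorm_le_of_kernel_eq_sum_mul (fun x _ => hξb x)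
    (fun y _ => hb.sum_norm_inner_sq_le_one (hη y)) hF
    (fun x _ y hy => (hk x y).trans (hexpand _ _ (Finset.mem_image_of_mem η hy))) hTT hST

/-- Schur multiplier bound from a Hilbert space factorization: if
`k(x,y) = ⟨ξ(x), η(y)⟩` with `‖ξ(x)‖ ≤ 1`, `‖η(y)‖ ≤ 1`, then for any finitely
supported kernel `T` on `X × X`, the operator with matrix coefficients
`k(x,y)·T(x,y)` has operator norm at most that of the operator with matrix `T`. -/
theorem stmt1 (X : Type*) [DecidableEq X]
    (H : Type*) [NormedAddCommGroup H] [InnerProductSpace ℂ H] [CompleteSpace H]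
    (ξ η : X → H) (hξ : ∀ x, ‖ξ x‖ ≤ 1) (hη : ∀ y, ‖η y‖ ≤ 1)
    (k : X → X → ℂ) (hk : ∀ x y, k x y = (inner ℂ (ξ x) (η y) : ℂ))
    (T : X → X → ℂ) (hTfin : (Function.support fun p : X × X => T p.1 p.2).Finite)
    (TT ST : lp (fun _ : X => ℂ) 2 →L[ℂ] lp (fun _ : X => ℂ) 2)
    (hTT : ∀ x y : X,
      (inner ℂ (TT (lp.single 2 y 1)) (lp.single 2 x (1 : ℂ)) : ℂ) = T x y)
    (hST : ∀ x y : X,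
      (inner ℂ (ST (lp.single 2 y 1)) (lp.single 2 x (1 : ℂ)) : ℂ) = k x y * T x y) :
    ‖ST‖ ≤ ‖TT‖ :=
  stmt1_general X H ξ η hξ hη k hk T hTfin TT ST hTT hST
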